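/- Let p ≥ 5 be a prime and n a positive integer, and let X_1, …, X_p ⊆ 𝔽_p^n be such that every cycle (x_1, …, x_p) ∈ X_1 × ⋯ × X_p satisfies x_1 = x_2. Let ℳ' = (x_{1,i}, x_{2,i}, …, x_{p,i})_{i=1}^{M} be a collection of pairwise disjoint cycles in X_1 × ⋯ × X_p such that for any two distinct indices i ≠ i' and any j ∈ {3, …, p}, the pair (x_{1,i}, x_{j,i'}) is not j-extendable. Then ℳ' is a p-colored sum-free set in 𝔽_p^n. -/

import Mathlib

/-!
Take indices `σ` with `∑ j, c (σ j) j = 0`. The transversal `j ↦ c (σ j) j` is itself a cycle,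
so it is a witness of `j`-extendability of `(c (σ 0) 0, c (σ j) j)` for every `j ≥ 2`, which
forces `σ j = σ 0`; and the hypothesis on `X` gives `c (σ 0) 0 = c (σ 1) 1`, so disjointness
forces `σ 1 = σ 0`. Conversely a constant choice of indices sums a single cycle.
-/

open Finset

section ColoredSumFree

variable {ι κ G : Type*} [Fintype ι] [AddCommMonoid G]

/-- `c l i` is the `i`-th entry of the `l`-th tuple. -/
def IsColoredSumFree (c : κ → ι → G) : Prop :=
  ∀ σ : ι → κ, ∑ j, c (σ j) j = 0 ↔ ∀ j j', σ j = σ j'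

theorem isColoredSumFree_of_forall_eq {c : κ → ι → G} (a : ι) (hc : ∀ l, ∑ i, c l i = 0)
    (h : ∀ σ : ι → κ, ∑ j, c (σ j) j = 0 → ∀ j, σ j = σ a) :
    IsColoredSumFree c := by
  intro σ
  refine ⟨fun hσ j j' => (h σ hσ j).trans (h σ hσ j').symm, fun hσ => ?_⟩
  calc ∑ j, c (σ j) j = ∑ j, c (σ a) j := sum_congr rfl fun j _ => by rw [hσ j a]
    _ = 0 := hc (σ a)

theorem forall_eq_of_sum_eq_zero_of_not_extendable {X : ι → Set G} {c : κ → ι → G} (a b : ι)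
    (hX : ∀ x : ι → G, (∀ i, x i ∈ X i) → ∑ i, x i = 0 → x a = x b)
    (hcX : ∀ l i, c l i ∈ X i)
    (hdisj : ∀ l l', c l a = c l' b → l = l')
    (hext : ∀ l l', l ≠ l' → ∀ j, j ≠ a → j ≠ b →
      ¬ ∃ w : ι → G, (∀ i, w i ∈ X i) ∧ ∑ i, w i = 0 ∧ w a = c l a ∧ w j = c l' j)
    {σ : ι → κ} (hσ : ∑ j, c (σ j) j = 0) (j : ι) :
    σ j = σ a := by
  have hσX : ∀ i, c (σ i) i ∈ X i := fun i => hcX (σ i) i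
  by_cases hja : j = a
  · rw [hja]
  by_cases hjb : j = b
  · rw [hjb]
    exact (hdisj _ _ (hX (fun i => c (σ i) i) hσX hσ)).symm
  by_contra hne
  exact hext (σ a) (σ j) (Ne.symm hne) j hja hjb ⟨fun i => c (σ i) i, hσX, hσ, rfl, rfl⟩

end ColoredSumFree

/-- Suppose `X_1, …, X_p ⊆ 𝔽_p^n` are such that every cycle (p-tuple summing to zero)
`(x_1, …, x_p) ∈ X_1 × ⋯ × X_p` satisfies `x_1 = x_2`. Let
`ℳ' = (x_{1,i}, …, x_{p,i})_{i=1}^M` be a collection of pairwise disjoint cycles in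
`X_1 × ⋯ × X_p` such that for any distinct `i ≠ i'` and any `j ∈ {3, …, p}`, the pair
`(x_{1,i}, x_{j,i'})` is not `j`-extendable. Then `ℳ'` is a `p`-colored sum-free set in
`𝔽_p^n`: for all `i_1, …, i_p`, `x_{1,i_1} + ⋯ + x_{p,i_p} = 0` iff `i_1 = ⋯ = i_p`. -/
theorem stmt11 {p n : ℕ} (hp5 : 5 ≤ p)
    (X : Fin p → Set (Fin n → ZMod p))
    (hX : ∀ x : Fin p → (Fin n → ZMod p), (∀ i, x i ∈ X i) → ∑ i, x i = 0 →
      x ⟨0, by omega⟩ = x ⟨1, by omega⟩)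
    (M : ℕ) (c : Fin M → Fin p → (Fin n → ZMod p))
    (hcyc : ∀ l, (∀ i, c l i ∈ X i) ∧ ∑ i, c l i = 0)
    (hdisj : ∀ l l', l ≠ l' → ∀ i i', c l i ≠ c l' i')
    (hext : ∀ l l', l ≠ l' → ∀ j : Fin p, 2 ≤ (j : ℕ) →
      ¬ ∃ w : Fin p → (Fin n → ZMod p), (∀ i, w i ∈ X i) ∧ ∑ i, w i = 0 ∧
        w ⟨0, by omega⟩ = c l ⟨0, by omega⟩ ∧ w j = c l' j) :
    ∀ i : Fin p → Fin M, ∑ j, c (i j) j = 0 ↔ ∀ j j', i j = i j' := by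
  refine isColoredSumFree_of_forall_eq _ (fun l => (hcyc l).2) fun σ hσ =>
    forall_eq_of_sum_eq_zero_of_not_extendable _ _ hX (fun l => (hcyc l).1) ?_ ?_ hσ
  · exact fun l l' h => by_contra fun hne => hdisj l l' hne _ _ h
  · intro l l' hne j hj0 hj1
    refine hext l l' hne j ?_
    have h0 : (j : ℕ) ≠ 0 := fun h => hj0 (Fin.ext h)
    have h1 : (j : ℕ) ≠ 1 := fun h => hj1 (Fin.ext h)
    omega
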